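/- (Clarkson inequality, part 2) Let 1 < p < ∞, let p′ = p/(p−1) be the conjugate index, and set r = min(p, p′). Then for all x, y ∈ ℓ_p: 2^{r−1}(‖x‖_p^r + ‖y‖_p^r) ≤ ‖x+y‖_p^r + ‖x−y‖_p^r ≤ 2(‖x‖_p^r + ‖y‖_p^r). -/

import Mathlib

/-!
For `p ≤ 2` we have `r = p`, and the upper bound holds coordinatewise:
`|a + b| ^ p + |a - b| ^ p ≤ 2 (|a| ^ p + |b| ^ p)` by concavity of `t ↦ t ^ (p / 2)`.

For `p > 2` we have `r = p' < 2`. The key scalar fact is the two-point inequality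
`(1 + t) ^ s' + (1 - t) ^ s' ≤ 2 (1 + t ^ s) ^ (s' - 1)` on `[0, 1]` for conjugate exponents
`s < 2 < s'`: at an interior minimum of the difference, the critical-point equation reduces it to
a power-mean inequality. Applied with `s = p'` to `(a + b, a - b)`, it gives coordinatewise
`2 ^ (p - 1) (|a| ^ p + |b| ^ p) ≤ (|a + b| ^ p' + |a - b| ^ p') ^ (p - 1)`. Summing and using
Minkowski's inequality in `ℓ^(p - 1)` yields Clarkson's inequality
`2 (‖x‖ ^ p + ‖y‖ ^ p) ^ (p' - 1) ≤ ‖x + y‖ ^ p' + ‖x - y‖ ^ p'`, and the power-mean inequality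
weakens it to the lower bound.

In both cases the other bound follows by substituting `x + y, x - y` for `x, y`.
-/

open Real Set
open scoped ENNReal

lemma rpow_add_rpow_le_two_rpow_mul {u v s : ℝ} (hu : 0 ≤ u) (hv : 0 ≤ v) (hs₀ : 0 ≤ s)
    (hs₁ : s ≤ 1) : u ^ s + v ^ s ≤ 2 ^ (1 - s) * (u + v) ^ s := by
  have h := (concaveOn_rpow hs₀ hs₁).2 (mem_Ici.2 hu) (mem_Ici.2 hv)
    (by norm_num : (0 : ℝ) ≤ 1 / 2) (by norm_num : (0 : ℝ) ≤ 1 / 2) (by norm_num)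
  simp only [smul_eq_mul] at h
  rw [← mul_add, ← mul_add, one_div, inv_mul_eq_div, mul_rpow (by norm_num) (by positivity),
    inv_rpow zero_le_two, ← rpow_neg zero_le_two, div_le_iff₀' two_pos] at h
  calc u ^ s + v ^ s ≤ 2 * (2 ^ (-s) * (u + v) ^ s) := h
    _ = 2 ^ (1 - s) * (u + v) ^ s := by
      rw [← mul_assoc, sub_eq_add_neg, rpow_add two_pos, rpow_one]

lemma sq_rpow_half_eq_abs_rpow (a p : ℝ) : (a ^ 2) ^ (p / 2) = |a| ^ p := by
  rw [← sq_abs, ← rpow_natCast, ← rpow_mul (abs_nonneg a)]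
  norm_num [mul_div_cancel₀]

lemma abs_add_rpow_add_abs_sub_rpow_le {p : ℝ} (hp₀ : 0 ≤ p) (hp₂ : p ≤ 2) (a b : ℝ) :
    |a + b| ^ p + |a - b| ^ p ≤ 2 * (|a| ^ p + |b| ^ p) := by
  have hs₀ : 0 ≤ p / 2 := by positivity
  have hs₁ : p / 2 ≤ 1 := by linarith
  calc |a + b| ^ p + |a - b| ^ p = ((a + b) ^ 2) ^ (p / 2) + ((a - b) ^ 2) ^ (p / 2) := by
        rw [sq_rpow_half_eq_abs_rpow _ p, sq_rpow_half_eq_abs_rpow _ p]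
    _ ≤ 2 ^ (1 - p / 2) * ((a + b) ^ 2 + (a - b) ^ 2) ^ (p / 2) :=
        rpow_add_rpow_le_two_rpow_mul (sq_nonneg _) (sq_nonneg _) hs₀ hs₁
    _ = 2 * (a ^ 2 + b ^ 2) ^ (p / 2) := by
        rw [show (a + b) ^ 2 + (a - b) ^ 2 = 2 * (a ^ 2 + b ^ 2) by ring,
          mul_rpow zero_le_two (by positivity), ← mul_assoc, ← rpow_add two_pos]
        norm_num
    _ ≤ 2 * (|a| ^ p + |b| ^ p) := by
        rw [← sq_rpow_half_eq_abs_rpow a p, ← sq_rpow_half_eq_abs_rpow b p]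
        gcongr
        exact rpow_add_le_add_rpow (sq_nonneg a) (sq_nonneg b) hs₀ hs₁

lemma Real.HolderConjugate.lt_two_iff {p q : ℝ} (hpq : p.HolderConjugate q) : p < 2 ↔ 2 < q := by
  have := hpq.sub_one_mul_conj
  have := hpq.sub_one_pos
  constructor <;> intro h <;> nlinarith

lemma two_rpow_sub_one_mul_rpow_add_rpow_le {p q u v : ℝ} (hpq : p.HolderConjugate q)
    (hp : 2 ≤ p) (hu : 0 ≤ u) (hv : 0 ≤ v) :
    2 ^ (q - 1) * (u ^ q + v ^ q) ≤ 2 * (u ^ p + v ^ p) ^ (q - 1) := by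
  have hq : q ≤ 2 := by nlinarith [hpq.sub_one_mul_conj, hpq.symm.pos]
  have hpow : ∀ c : ℝ, 0 ≤ c → (c ^ p) ^ (q - 1) = c ^ q := fun c hc => by
    rw [← rpow_mul hc, mul_comm, hpq.symm.sub_one_mul_conj]
  have h := rpow_add_rpow_le_two_rpow_mul (rpow_nonneg hu p) (rpow_nonneg hv p)
    hpq.symm.sub_one_pos.le (by linarith : q - 1 ≤ 1)
  rw [hpow u hu, hpow v hv] at h
  calc 2 ^ (q - 1) * (u ^ q + v ^ q)
      ≤ 2 ^ (q - 1) * (2 ^ (1 - (q - 1)) * (u ^ p + v ^ p) ^ (q - 1)) := by gcongr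
    _ = 2 * (u ^ p + v ^ p) ^ (q - 1) := by
      rw [← mul_assoc, ← rpow_add two_pos]; norm_num

lemma rpow_sub_one_add_rpow_sub_one_rpow_le {a b q : ℝ} (ha : 0 ≤ a) (hb : 0 ≤ b)
    (hab : a + b = 2) (hq : 2 < q) :
    (a ^ (q - 1) + b ^ (q - 1)) ^ (q - 1) ≤ 2 * (a ^ q + b ^ q) ^ (q - 2) := by
  have hq₂ : 0 < q - 2 := by linarith
  set s := (q - 1) / (q - 2)
  have hs : 1 ≤ s := by rw [le_div_iff₀ hq₂]; linarith
  have hpow : ∀ c : ℝ, 0 ≤ c → c * (c ^ (q - 2)) ^ s = c ^ q ∧ c * c ^ (q - 2) = c ^ (q - 1) :=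
    fun c hc => by
      rw [← rpow_mul hc, mul_div_cancel₀ _ hq₂.ne', mul_comm, ← rpow_add_one' hc (by linarith),
        mul_comm, ← rpow_add_one' hc (by linarith)]
      constructor <;> ring_nf
  -- Jensen for `x ↦ x ^ s` with the probability weights `a / 2`, `b / 2`
  have h := (convexOn_rpow hs).2 (mem_Ici.2 (rpow_nonneg ha (q - 2)))
    (mem_Ici.2 (rpow_nonneg hb (q - 2))) (div_nonneg ha zero_le_two)
    (div_nonneg hb zero_le_two) (by linarith)
  simp only [smul_eq_mul, div_mul_eq_mul_div, (hpow a ha).1, (hpow a ha).2, (hpow b hb).1,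
    (hpow b hb).2, ← add_div] at h
  have h' := rpow_le_rpow (by positivity) h hq₂.le
  rw [← rpow_mul (by positivity), div_mul_cancel₀ _ hq₂.ne', div_rpow (by positivity) zero_le_two,
    div_rpow (by positivity) zero_le_two, div_le_div_iff₀ (by positivity) (by positivity)] at h'
  have h2 : (2 : ℝ) ^ (q - 1) = 2 ^ (q - 2) * 2 := by
    rw [← rpow_add_one two_ne_zero]; ring_nf
  rw [h2] at h'
  nlinarith [rpow_pos_of_pos two_pos (q - 2)]

lemma nonneg_of_nonneg_at_critical_points {f f' : ℝ → ℝ} {a b : ℝ} (hab : a ≤ b)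
    (hf : ContinuousOn f (Icc a b)) (ha : 0 ≤ f a) (hb : 0 ≤ f b)
    (hf' : ∀ t ∈ Ioo a b, HasDerivAt f (f' t) t) (hcrit : ∀ t ∈ Ioo a b, f' t = 0 → 0 ≤ f t) :
    ∀ t ∈ Icc a b, 0 ≤ f t := by
  obtain ⟨t₀, ⟨hat₀, ht₀b⟩, hmin⟩ := isCompact_Icc.exists_isMinOn (nonempty_Icc.2 hab) hf
  refine fun t ht => le_trans ?_ (hmin ht)
  rcases hat₀.eq_or_lt with rfl | hat₀
  · exact ha
  rcases ht₀b.eq_or_lt with rfl | ht₀b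
  · exact hb
  have hloc : IsLocalMin f t₀ := hmin.isLocalMin (Icc_mem_nhds hat₀ ht₀b)
  exact hcrit t₀ ⟨hat₀, ht₀b⟩ (hloc.hasDerivAt_eq_zero (hf' t₀ ⟨hat₀, ht₀b⟩))

noncomputable def clarksonGap (p q t : ℝ) : ℝ :=
  2 * (1 + t ^ p) ^ (q - 1) - ((1 + t) ^ q + (1 - t) ^ q)

section TwoPoint

variable {p q : ℝ}

lemma continuousOn_clarksonGap (hpq : p.HolderConjugate q) :
    ContinuousOn (clarksonGap p q) (Icc 0 1) := by
  have hp := hpq.nonneg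
  have hq := hpq.symm.nonneg
  unfold clarksonGap
  refine ContinuousOn.sub (continuousOn_const.mul ?_) (ContinuousOn.add ?_ ?_)
  · exact (continuousOn_const.add (continuousOn_id.rpow_const fun _ _ => Or.inr hp)).rpow_const
      fun t ht => Or.inl (by simp only [Pi.add_apply, id]; linarith [rpow_nonneg ht.1 p])
  · exact (continuousOn_const.add continuousOn_id).rpow_const fun _ _ => Or.inr hq
  · exact (continuousOn_const.sub continuousOn_id).rpow_const fun _ _ => Or.inr hq

lemma clarksonGap_zero (hpq : p.HolderConjugate q) : clarksonGap p q 0 = 0 := by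
  simp [clarksonGap, zero_rpow hpq.ne_zero]
  ring

lemma clarksonGap_one (hpq : p.HolderConjugate q) : clarksonGap p q 1 = 0 := by
  simp [clarksonGap, zero_rpow hpq.symm.ne_zero]
  rw [one_add_one_eq_two, ← rpow_one_add' zero_le_two (by linarith [hpq.symm.pos])]
  ring_nf

lemma hasDerivAt_clarksonGap (hpq : p.HolderConjugate q) {t : ℝ} (ht : t ∈ Ioo 0 1) :
    HasDerivAt (clarksonGap p q)
      (q * (2 * t ^ (p - 1) * (1 + t ^ p) ^ (q - 2) - ((1 + t) ^ (q - 1) - (1 - t) ^ (q - 1))))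
      t := by
  obtain ⟨ht₀, ht₁⟩ := ht
  have hpow : HasDerivAt (fun s : ℝ => 1 + s ^ p) (p * t ^ (p - 1)) t :=
    (hasDerivAt_rpow_const (Or.inl ht₀.ne')).const_add 1
  have h₁ := (hpow.rpow_const (p := q - 1) (Or.inl (by positivity))).const_mul 2
  have h₂ := ((hasDerivAt_id t).const_add 1).rpow_const (p := q) (Or.inl (by simp; linarith))
  have h₃ := ((hasDerivAt_id t).const_sub 1).rpow_const (p := q) (Or.inl (by simp; linarith))
  refine (h₁.sub (h₂.add h₃)).congr_deriv ?_
  rw [show q - 1 - 1 = q - 2 by ring, id]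
  linear_combination (2 * t ^ (p - 1) * (1 + t ^ p) ^ (q - 2)) * hpq.symm.sub_one_mul_conj

lemma clarksonGap_nonneg_of_critical (hpq : p.HolderConjugate q) (hp : p < 2) {t : ℝ}
    (ht : t ∈ Ioo 0 1)
    (hcrit : 2 * t ^ (p - 1) * (1 + t ^ p) ^ (q - 2) = (1 + t) ^ (q - 1) - (1 - t) ^ (q - 1)) :
    0 ≤ clarksonGap p q t := by
  obtain ⟨ht₀, ht₁⟩ := ht
  have hq := hpq.lt_two_iff.1 hp
  have ha : 0 < 1 + t := by linarith
  have hb : 0 < 1 - t := by linarith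
  set x := t ^ p
  set M := (1 + x) ^ (q - 2)
  set σ := (1 + t) ^ (q - 1) + (1 - t) ^ (q - 1)
  have hx : 0 < x := rpow_pos_of_pos ht₀ p
  have hσ : 0 < σ := by positivity
  have hrpow : ∀ c : ℝ, 0 < c → ∀ r : ℝ, c ^ (r + 1) = c * c ^ r := fun c hc r => by
    rw [rpow_add_one hc.ne', mul_comm]
  have hS : (1 + t) ^ q + (1 - t) ^ q = σ + 2 * x * M := by
    have hxt : t * t ^ (p - 1) = x := by rw [← hrpow t ht₀, sub_add_cancel]
    rw [← sub_add_cancel q 1, hrpow _ ha, hrpow _ hb, ← hxt]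
    linear_combination -t * hcrit
  have hgap : clarksonGap p q t = 2 * M - σ := by
    rw [clarksonGap, hS, show q - 1 = q - 2 + 1 by ring, hrpow _ (by positivity)]
    ring
  rw [hgap, sub_nonneg]
  by_contra! hσM
  have hlyap := rpow_sub_one_add_rpow_sub_one_rpow_le ha.le hb.le (by ring) hq
  rw [hS] at hlyap
  have hSlt : σ + 2 * x * M < σ * (1 + x) := by nlinarith
  have hq₂ : 0 < q - 2 := by linarith
  have : σ ^ (q - 1) < σ ^ (q - 1) :=
    calc σ ^ (q - 1) ≤ 2 * (σ + 2 * x * M) ^ (q - 2) := hlyap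
      _ < 2 * (σ * (1 + x)) ^ (q - 2) := by gcongr
      _ = σ ^ (q - 2) * (2 * M) := by rw [mul_rpow hσ.le (by positivity)]; ring
      _ < σ ^ (q - 2) * σ := by gcongr
      _ = σ ^ (q - 1) := by rw [show q - 1 = q - 2 + 1 by ring, hrpow σ hσ]; ring
  exact lt_irrefl _ this

lemma clarksonGap_nonneg (hpq : p.HolderConjugate q) (hp : p < 2) {t : ℝ} (ht : t ∈ Icc 0 1) :
    0 ≤ clarksonGap p q t := by
  refine nonneg_of_nonneg_at_critical_points zero_le_one (continuousOn_clarksonGap hpq)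
    (clarksonGap_zero hpq).ge (clarksonGap_one hpq).ge (fun s hs => hasDerivAt_clarksonGap hpq hs)
    (fun s hs hcrit => clarksonGap_nonneg_of_critical hpq hp hs ?_) t ht
  have hq := hpq.symm.pos
  rw [mul_eq_zero] at hcrit
  linarith [hcrit.resolve_left hq.ne']

lemma add_rpow_add_sub_rpow_le_of_holderConjugate (hpq : p.HolderConjugate q) (hp : p < 2)
    {A B : ℝ} (hB : 0 ≤ B) (hBA : B ≤ A) :
    (A + B) ^ q + (A - B) ^ q ≤ 2 * (A ^ p + B ^ p) ^ (q - 1) := by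
  have hA : 0 ≤ A := hB.trans hBA
  rcases hA.eq_or_lt with rfl | hA
  · obtain rfl : B = 0 := le_antisymm hBA hB
    simp [zero_rpow hpq.ne_zero, zero_rpow hpq.symm.ne_zero,
      zero_rpow (sub_ne_zero.2 (hpq.symm.lt.ne'))]
  obtain ⟨t, ht, rfl⟩ : ∃ t ∈ Icc (0 : ℝ) 1, B = A * t :=
    ⟨B / A, ⟨div_nonneg hB hA.le, (div_le_one hA).2 hBA⟩, (mul_div_cancel₀ B hA.ne').symm⟩
  have hgap := clarksonGap_nonneg hpq hp ht
  rw [clarksonGap, sub_nonneg] at hgap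
  have hpow : (A ^ p + (A * t) ^ p) ^ (q - 1) = A ^ q * (1 + t ^ p) ^ (q - 1) := by
    rw [mul_rpow hA.le ht.1, ← mul_one_add, mul_rpow (by positivity)
      (by linarith [rpow_nonneg ht.1 p]), ← rpow_mul hA.le, mul_comm p, hpq.symm.sub_one_mul_conj]
  calc (A + A * t) ^ q + (A - A * t) ^ q = A ^ q * ((1 + t) ^ q + (1 - t) ^ q) := by
        rw [← mul_one_add, ← mul_one_sub, mul_rpow hA.le (by linarith [ht.1]),
          mul_rpow hA.le (by linarith [ht.2])]
        ring
    _ ≤ A ^ q * (2 * (1 + t ^ p) ^ (q - 1)) := by gcongr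
    _ = 2 * (A ^ p + (A * t) ^ p) ^ (q - 1) := by rw [hpow]; ring

lemma abs_add_rpow_add_abs_sub_rpow_le_of_holderConjugate (hpq : p.HolderConjugate q)
    (hp : p < 2) (u v : ℝ) :
    |u + v| ^ q + |u - v| ^ q ≤ 2 * (|u| ^ p + |v| ^ p) ^ (q - 1) := by
  wlog hv : 0 ≤ v generalizing v
  · have h := this (-v) (by linarith)
    rwa [← sub_eq_add_neg, sub_neg_eq_add, abs_neg, add_comm (|u - v| ^ q)] at h
  wlog hu : 0 ≤ u generalizing u
  · have h := this (-u) (by linarith)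
    rwa [show -u + v = -(u - v) by ring, show -u - v = -(u + v) by ring, abs_neg, abs_neg,
      abs_neg, add_comm (|u - v| ^ q)] at h
  wlog hvu : v ≤ u generalizing u v
  · simpa [add_comm, abs_sub_comm] using this u hu v hv (by linarith)
  rw [abs_of_nonneg hu, abs_of_nonneg hv, abs_of_nonneg (by linarith),
    abs_of_nonneg (by linarith)]
  exact add_rpow_add_sub_rpow_le_of_holderConjugate hpq hp hv hvu

lemma two_rpow_mul_abs_rpow_add_abs_rpow_le (hpq : p.HolderConjugate q) (hp : 2 < p)
    (a b : ℝ) :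
    2 ^ (p - 1) * (|a| ^ p + |b| ^ p) ≤ (|a + b| ^ q + |a - b| ^ q) ^ (p - 1) := by
  have hq : q < 2 := hpq.symm.lt_two_iff.2 hp
  have h := abs_add_rpow_add_abs_sub_rpow_le_of_holderConjugate hpq.symm hq (a + b) (a - b)
  rw [show a + b + (a - b) = 2 * a by ring, show a + b - (a - b) = 2 * b by ring, abs_mul,
    abs_mul, abs_two, mul_rpow zero_le_two (abs_nonneg a), mul_rpow zero_le_two (abs_nonneg b),
    ← mul_add] at h
  rw [rpow_sub_one two_ne_zero, div_mul_eq_mul_div, div_le_iff₀ two_pos]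
  linarith

end TwoPoint

namespace lp

variable {ι : Type*} {p q : ℝ} [Fact (1 ≤ ENNReal.ofReal p)]

lemma hasSum_abs_rpow (x : lp (fun _ : ι => ℝ) (ENNReal.ofReal p)) :
    HasSum (fun i => |x i| ^ p) (‖x‖ ^ p) := by
  have hp₁ : 1 ≤ p := ENNReal.one_le_ofReal.1 Fact.out
  have hp : (ENNReal.ofReal p).toReal = p := ENNReal.toReal_ofReal (by linarith)
  have h := hasSum_norm (by rw [hp]; linarith) x
  simpa only [hp, Real.norm_eq_abs] using h

lemma norm_add_rpow_add_norm_sub_rpow_le (hp : p ≤ 2)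
    (x y : lp (fun _ : ι => ℝ) (ENNReal.ofReal p)) :
    ‖x + y‖ ^ p + ‖x - y‖ ^ p ≤ 2 * (‖x‖ ^ p + ‖y‖ ^ p) := by
  have hp₀ : 0 ≤ p := zero_le_one.trans (ENNReal.one_le_ofReal.1 Fact.out)
  refine hasSum_le (fun i => ?_) ((hasSum_abs_rpow (x + y)).add (hasSum_abs_rpow (x - y)))
    (((hasSum_abs_rpow x).add (hasSum_abs_rpow y)).mul_left 2)
  simpa using abs_add_rpow_add_abs_sub_rpow_le hp₀ hp (x i) (y i)

lemma two_mul_rpow_le_norm_add_rpow_add_norm_sub_rpow (hpq : p.HolderConjugate q) (hp : 2 < p)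
    (x y : lp (fun _ : ι => ℝ) (ENNReal.ofReal p)) :
    2 * (‖x‖ ^ p + ‖y‖ ^ p) ^ (q - 1) ≤ ‖x + y‖ ^ q + ‖x - y‖ ^ q := by
  have hρ : 1 ≤ p - 1 := by linarith
  have hρq : 1 / (p - 1) = q - 1 := by
    rw [div_eq_iff (by linarith)]
    linear_combination -hpq.mul_eq_add
  have hpow : ∀ c : ℝ, (|c| ^ q) ^ (p - 1) = |c| ^ p := fun c => by
    rw [← rpow_mul (abs_nonneg c), mul_comm, hpq.sub_one_mul_conj]
  have hnorm : ∀ z : lp (fun _ : ι => ℝ) (ENNReal.ofReal p),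
      (∑' i, (|z i| ^ q) ^ (p - 1)) ^ (1 / (p - 1)) = ‖z‖ ^ q := fun z => by
    rw [tsum_congr fun i => hpow (z i), (hasSum_abs_rpow z).tsum_eq, ← rpow_mul (norm_nonneg z),
      hρq, mul_comm p, hpq.symm.sub_one_mul_conj]
  obtain ⟨hsum, hminkowski⟩ := Real.Lp_add_le_tsum_of_nonneg hρ
    (f := fun i => |(x + y) i| ^ q) (g := fun i => |(x - y) i| ^ q)
    (fun i => by positivity) (fun i => by positivity)
    ((hasSum_abs_rpow (x + y)).summable.congr fun i => (hpow _).symm)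
    ((hasSum_abs_rpow (x - y)).summable.congr fun i => (hpow _).symm)
  have hpointwise : 2 ^ (p - 1) * (‖x‖ ^ p + ‖y‖ ^ p) ≤
      ∑' i, (|(x + y) i| ^ q + |(x - y) i| ^ q) ^ (p - 1) :=
    hasSum_le (fun i => by simpa using two_rpow_mul_abs_rpow_add_abs_rpow_le hpq hp (x i) (y i))
      (((hasSum_abs_rpow x).add (hasSum_abs_rpow y)).mul_left _) hsum.hasSum
  calc 2 * (‖x‖ ^ p + ‖y‖ ^ p) ^ (q - 1)
      = (2 ^ (p - 1) * (‖x‖ ^ p + ‖y‖ ^ p)) ^ (1 / (p - 1)) := by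
        rw [mul_rpow (by positivity) (by positivity), ← rpow_mul zero_le_two,
          mul_one_div_cancel (by linarith), rpow_one, hρq]
    _ ≤ (∑' i, (|(x + y) i| ^ q + |(x - y) i| ^ q) ^ (p - 1)) ^ (1 / (p - 1)) := by
        gcongr
    _ ≤ ‖x + y‖ ^ q + ‖x - y‖ ^ q := by rw [← hnorm, ← hnorm]; exact hminkowski

end lp

section NormedSpace

variable {E : Type*} [SeminormedAddCommGroup E] [NormedSpace ℝ E]

lemma norm_add_add_sub_rpow_add_norm_add_sub_sub_rpow (x y : E) (r : ℝ) :
    ‖(x + y) + (x - y)‖ ^ r + ‖(x + y) - (x - y)‖ ^ r = 2 ^ r * (‖x‖ ^ r + ‖y‖ ^ r) := by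
  rw [show (x + y) + (x - y) = (2 : ℝ) • x by rw [two_smul]; abel,
    show (x + y) - (x - y) = (2 : ℝ) • y by rw [two_smul]; abel, norm_smul, norm_smul,
    Real.norm_two, mul_rpow zero_le_two (norm_nonneg x), mul_rpow zero_le_two (norm_nonneg y),
    mul_add]

lemma forall_two_rpow_sub_one_mul_le_iff (r : ℝ) :
    (∀ x y : E, 2 ^ (r - 1) * (‖x‖ ^ r + ‖y‖ ^ r) ≤ ‖x + y‖ ^ r + ‖x - y‖ ^ r) ↔
      ∀ x y : E, ‖x + y‖ ^ r + ‖x - y‖ ^ r ≤ 2 * (‖x‖ ^ r + ‖y‖ ^ r) := by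
  have h2 : (2 : ℝ) ^ r = 2 ^ (r - 1) * 2 := by rw [← rpow_add_one two_ne_zero, sub_add_cancel]
  have hpos : (0 : ℝ) < 2 ^ (r - 1) := rpow_pos_of_pos two_pos _
  constructor
  · intro H x y
    have h := H (x + y) (x - y)
    rw [norm_add_add_sub_rpow_add_norm_add_sub_sub_rpow, h2, mul_assoc] at h
    exact le_of_mul_le_mul_left h hpos
  · intro H x y
    have h := H (x + y) (x - y)
    rw [norm_add_add_sub_rpow_add_norm_add_sub_sub_rpow, h2, mul_assoc] at h
    linarith

end NormedSpace

/-- **Clarkson inequality, part 2.** For `1 < p < ∞`, with `p'` the conjugate index of `p`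
and `r = min (p, p')`, for all `x, y ∈ ℓ_p`:
`2^(r-1) (‖x‖^r + ‖y‖^r) ≤ ‖x+y‖^r + ‖x-y‖^r ≤ 2 (‖x‖^r + ‖y‖^r)`. -/
theorem clarkson_inequality_two (p : ℝ) (hp : 1 < p)
    (p' r : ℝ) (hp' : p' = p / (p - 1)) (hr : r = min p p') :
    haveI : Fact ((1 : ℝ≥0∞) ≤ ENNReal.ofReal p) := ⟨ENNReal.one_le_ofReal.mpr hp.le⟩
    ∀ x y : lp (fun _ : ℕ => ℝ) (ENNReal.ofReal p),
      (2 : ℝ) ^ (r - 1) * (‖x‖ ^ r + ‖y‖ ^ r) ≤ ‖x + y‖ ^ r + ‖x - y‖ ^ r ∧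
      ‖x + y‖ ^ r + ‖x - y‖ ^ r ≤ 2 * (‖x‖ ^ r + ‖y‖ ^ r) := by
  have : Fact ((1 : ℝ≥0∞) ≤ ENNReal.ofReal p) := ⟨ENNReal.one_le_ofReal.mpr hp.le⟩
  intro x y
  have hpq : p.HolderConjugate p' := (Real.holderConjugate_iff_eq_conjExponent hp).2 hp'
  have hpp' := hpq.sub_one_mul_conj
  rcases le_or_gt p 2 with hp₂ | hp₂
  · rw [hr, min_eq_left (by nlinarith [hpq.symm.pos])]
    have upper := lp.norm_add_rpow_add_norm_sub_rpow_le (ι := ℕ) hp₂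
    exact ⟨(forall_two_rpow_sub_one_mul_le_iff p).2 upper x y, upper x y⟩
  · rw [hr, min_eq_right (by nlinarith [hpq.symm.pos])]
    have lower : ∀ x y : lp (fun _ : ℕ => ℝ) (ENNReal.ofReal p),
        2 ^ (p' - 1) * (‖x‖ ^ p' + ‖y‖ ^ p') ≤ ‖x + y‖ ^ p' + ‖x - y‖ ^ p' := fun x y =>
      (two_rpow_sub_one_mul_rpow_add_rpow_le hpq hp₂.le (norm_nonneg x) (norm_nonneg y)).trans
        (lp.two_mul_rpow_le_norm_add_rpow_add_norm_sub_rpow hpq hp₂ x y)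
    exact ⟨lower x y, (forall_two_rpow_sub_one_mul_le_iff p').1 lower x y⟩
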